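/- Let B ∈ ℂ^{n×k} have rank k with unique orthonormal polar factor P_*, and let P ∈ ℂ^{n×k} have orthonormal columns with R(P) = R(P_*). Let η = ‖B‖_tr − Re(tr(Pᴴ B)). Then ‖P − P_*‖_F ≤ √(2η / σ_min(B)). -/

import Mathlib

open scoped ComplexOrder
open Matrix

/-- The tuple `f` rearranged into decreasing order; `sortedDesc f 0` is the largest entry. -/
noncomputable def sortedDesc {m : ℕ} (f : Fin m → ℝ) : Fin m → ℝ :=
  fun i => (f ∘ Tuple.sort f) i.rev

/-- The singular values of a complex matrix, in decreasing order. -/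
noncomputable def sv {n k : ℕ} (B : Matrix (Fin n) (Fin k) ℂ) : Fin k → ℝ :=
  sortedDesc fun i =>
    Real.sqrt ((Matrix.posSemidef_conjTranspose_mul_self B).isHermitian.eigenvalues i)

/-- The trace (nuclear) norm: the sum of the singular values. -/
noncomputable def trNorm {n k : ℕ} (B : Matrix (Fin n) (Fin k) ℂ) : ℝ := ∑ i, sv B i

/-- The Frobenius norm. -/
noncomputable def frobNorm {n k : ℕ} (A : Matrix (Fin n) (Fin k) ℂ) : ℝ :=
  Real.sqrt (∑ i, ∑ j, ‖A i j‖ ^ 2)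

/-- `‖sin Θ(R(X), R(Y))‖_F` where `Θ` is the diagonal matrix of canonical angles
`θ_i = arccos σ_i(Xᴴ Y)` between the column spaces of `X` and `Y`. -/
noncomputable def sinThetaF {n k : ℕ} (X Y : Matrix (Fin n) (Fin k) ℂ) : ℝ :=
  Real.sqrt (∑ i, Real.sin (Real.arccos (sv (Xᴴ * Y) i)) ^ 2)

/-- The smallest singular value. -/
noncomputable def smin {n k : ℕ} (B : Matrix (Fin n) (Fin k) ℂ) : ℝ := ⨅ i, sv B i

/-- The spectral norm (largest singular value). -/
noncomputable def s2norm {n k : ℕ} (B : Matrix (Fin n) (Fin k) ℂ) : ℝ := ⨆ i, sv B i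

/-- The orthonormal polar factor `B (Bᴴ B)^{-1/2}` (for `B` of full column rank). -/
noncomputable def polarFactor {n k : ℕ} (B : Matrix (Fin n) (Fin k) ℂ) :
    Matrix (Fin n) (Fin k) ℂ :=
  B * (((Matrix.posSemidef_conjTranspose_mul_self B).isHermitian.eigenvectorUnitary :
      Matrix (Fin k) (Fin k) ℂ) *
    Matrix.diagonal ((↑) ∘ (fun x : ℝ => Real.sqrt x) ∘
      (Matrix.posSemidef_conjTranspose_mul_self B).isHermitian.eigenvalues) *
    (star (Matrix.posSemidef_conjTranspose_mul_self B).isHermitian.eigenvectorUnitary :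
      Matrix (Fin k) (Fin k) ℂ))⁻¹

/-- Eigenvalues of a Hermitian matrix, in decreasing order. -/
noncomputable def eigsDesc {n : ℕ} {H : Matrix (Fin n) (Fin n) ℂ} (hH : H.IsHermitian) :
    Fin n → ℝ :=
  sortedDesc hH.eigenvalues

/-!
Write `H = (BᴴB)^{1/2}`, so that `P_* = B H⁻¹` satisfies `P_*ᴴ P_* = 1`, `P_* H = B` and
`‖B‖_tr = tr H`. For orthonormal `P` and `E = P - P_*`, expanding `Eᴴ E = 2 - Pᴴ P_* - P_*ᴴ P`
gives `Re tr(Eᴴ E H) = 2 (tr H - Re tr(Pᴴ B)) = 2η`, while `tr(Eᴴ E) = ‖E‖_F²`. Since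
`H ≥ σ_min(B)` in the Loewner order, `E (H - σ_min(B)) Eᴴ` is positive semidefinite, and taking
traces yields `σ_min(B) ‖E‖_F² ≤ 2η`.
-/

open scoped MatrixOrder

theorem sum_sortedDesc {m : ℕ} (f : Fin m → ℝ) : ∑ i, sortedDesc f i = ∑ i, f i :=
  Equiv.sum_comp (Fin.revPerm.trans (Tuple.sort f)) f

theorem iInf_sortedDesc {m : ℕ} (f : Fin m → ℝ) : ⨅ i, sortedDesc f i = ⨅ i, f i :=
  Equiv.iInf_comp (g := f) (Fin.revPerm.trans (Tuple.sort f))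

namespace Matrix

variable {m n : Type*} [Fintype m] [Fintype n]

theorem re_trace_conjTranspose_mul_mul_comm {M : Matrix m m ℂ} (hM : M.IsHermitian)
    (X Y : Matrix n m ℂ) : (Yᴴ * X * M).trace.re = (Xᴴ * Y * M).trace.re :=
  calc (Yᴴ * X * M).trace.re = (star (Yᴴ * X * M).trace).re := (Complex.conj_re _).symm
    _ = (Xᴴ * Y * M).trace.re := by
      rw [← trace_conjTranspose, conjTranspose_mul, conjTranspose_mul,
        conjTranspose_conjTranspose, hM.eq, trace_mul_comm, Matrix.mul_assoc]

variable [DecidableEq m]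

theorem isUnit_of_rank_eq_card {K : Type*} [Field K] {M : Matrix m m K}
    (h : M.rank = Fintype.card m) : IsUnit M := by
  rw [← mulVec_surjective_iff_isUnit]
  change Function.Surjective M.mulVecLin
  rw [← LinearMap.range_eq_top]
  apply Submodule.eq_top_of_finrank_eq
  rw [← rank, h, Module.finrank_fintype_fun_eq_card]

theorem IsHermitian.trace_cfc {𝕜 : Type*} [RCLike 𝕜] {A : Matrix m m 𝕜} (hA : A.IsHermitian)
    (f : ℝ → ℝ) : (cfc f A).trace = ∑ i, (f (hA.eigenvalues i) : 𝕜) := by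
  rw [hA.cfc_eq, IsHermitian.cfc, Unitary.conjStarAlgAut_apply, trace_mul_cycle,
    Unitary.coe_star_mul_self, one_mul, trace_diagonal]
  rfl

theorem PosSemidef.cfc_sqrt_mul_self {𝕜 : Type*} [RCLike 𝕜] {A : Matrix m m 𝕜}
    (hA : A.PosSemidef) :
    cfc Real.sqrt A * cfc Real.sqrt A = A := by
  rw [← cfc_mul ..]
  conv_rhs => rw [← cfc_id' ℝ A]
  exact cfc_congr fun x hx => Real.mul_self_sqrt (spectrum_nonneg_of_nonneg hA.nonneg hx)

theorem conjTranspose_mul_inv_mul_self_eq_one {B : Matrix n m ℂ} {H : Matrix m m ℂ}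
    (hH : H.IsHermitian) (hHH : H * H = Bᴴ * B) (hunit : IsUnit H) :
    (B * H⁻¹)ᴴ * (B * H⁻¹) = 1 := by
  have hdet : IsUnit H.det := (isUnit_iff_isUnit_det H).mp hunit
  rw [conjTranspose_mul, conjTranspose_nonsing_inv, hH.eq]
  calc H⁻¹ * Bᴴ * (B * H⁻¹) = H⁻¹ * (Bᴴ * B) * H⁻¹ := by simp only [Matrix.mul_assoc]
    _ = (H⁻¹ * H) * (H * H⁻¹) := by rw [← hHH]; simp only [Matrix.mul_assoc]
    _ = 1 := by rw [nonsing_inv_mul _ hdet, mul_nonsing_inv _ hdet, Matrix.one_mul]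

theorem re_trace_conjTranspose_sub_mul_sub_mul {P Q : Matrix n m ℂ} (hP : Pᴴ * P = 1)
    (hQ : Qᴴ * Q = 1) {M : Matrix m m ℂ} (hM : M.IsHermitian) :
    ((P - Q)ᴴ * (P - Q) * M).trace.re = 2 * (M.trace.re - (Pᴴ * Q * M).trace.re) := by
  have hexpand : (P - Q)ᴴ * (P - Q) * M = M + M - Pᴴ * Q * M - Qᴴ * P * M := by
    rw [conjTranspose_sub, Matrix.sub_mul, Matrix.mul_sub, Matrix.mul_sub, hP, hQ]
    simp only [Matrix.sub_mul, Matrix.one_mul]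
    abel
  rw [hexpand, trace_sub, trace_sub, trace_add, Complex.sub_re, Complex.sub_re, Complex.add_re,
    re_trace_conjTranspose_mul_mul_comm hM]
  ring

theorem mul_re_trace_conjTranspose_sub_mul_sub_le {P Q : Matrix n m ℂ} (hP : Pᴴ * P = 1)
    (hQ : Qᴴ * Q = 1) {H : Matrix m m ℂ} (hH : H.IsHermitian) {σ : ℝ}
    (hσ : algebraMap ℝ _ σ ≤ H) :
    σ * ((P - Q)ᴴ * (P - Q)).trace.re ≤ 2 * (H.trace.re - (Pᴴ * (Q * H)).trace.re) := by
  have hgap : 0 ≤ ((P - Q)ᴴ * (P - Q) * (H - algebraMap ℝ _ σ)).trace.re := by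
    rw [trace_mul_cycle, trace_mul_cycle]
    exact (Complex.nonneg_iff.mp
      ((le_iff.mp hσ).mul_mul_conjTranspose_same (P - Q)).trace_nonneg).1
  have hH_expand := re_trace_conjTranspose_sub_mul_sub_mul hP hQ hH
  have hone_expand := re_trace_conjTranspose_sub_mul_sub_mul hP hQ (isHermitian_one (α := ℂ))
  rw [Algebra.algebraMap_eq_smul_one, Matrix.mul_sub, Matrix.mul_smul, trace_sub, trace_smul,
    Complex.sub_re, Complex.smul_re] at hgap
  simp only [Matrix.mul_one, trace_one, smul_eq_mul] at hone_expand hgap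
  rw [← Matrix.mul_assoc]
  linarith

end Matrix

theorem frobNorm_eq_sqrt_re_trace {n k : ℕ} (A : Matrix (Fin n) (Fin k) ℂ) :
    frobNorm A = √(Aᴴ * A).trace.re := by
  simp only [frobNorm, Matrix.trace, Matrix.diag, Matrix.mul_apply, Matrix.conjTranspose_apply,
    Complex.re_sum, RCLike.star_def, RCLike.conj_mul]
  rw [Finset.sum_comm]
  norm_cast

theorem trNorm_eq_re_trace_cfc_sqrt {n k : ℕ} (B : Matrix (Fin n) (Fin k) ℂ) :
    trNorm B = (cfc Real.sqrt (Bᴴ * B)).trace.re := by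
  rw [(posSemidef_conjTranspose_mul_self B).isHermitian.trace_cfc, Complex.re_sum, trNorm, sv,
    sum_sortedDesc]
  simp only [Complex.coe_algebraMap, Complex.ofReal_re]

theorem smin_eq_iInf_sqrt_eigenvalues {n k : ℕ} (B : Matrix (Fin n) (Fin k) ℂ) :
    smin B = ⨅ i, √((posSemidef_conjTranspose_mul_self B).isHermitian.eigenvalues i) :=
  iInf_sortedDesc _

theorem algebraMap_smin_le_cfc_sqrt {n k : ℕ} (B : Matrix (Fin n) (Fin k) ℂ) :
    algebraMap ℝ _ (smin B) ≤ cfc Real.sqrt (Bᴴ * B) := by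
  have hB := (posSemidef_conjTranspose_mul_self B).isHermitian
  refine algebraMap_le_cfc _ _ _ ?_ (ha := hB)
  rw [hB.spectrum_real_eq_range_eigenvalues]
  rintro _ ⟨i, rfl⟩
  rw [smin_eq_iInf_sqrt_eigenvalues]
  exact ciInf_le (Set.finite_range _).bddBelow i

theorem smin_pos {n k : ℕ} [NeZero k] {B : Matrix (Fin n) (Fin k) ℂ} (h : IsUnit (Bᴴ * B)) :
    0 < smin B := by
  have hB := (posSemidef_conjTranspose_mul_self B).posDef_iff_isUnit.mpr h
  obtain ⟨i, hi⟩ := exists_eq_ciInf_of_finite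
    (f := fun i => √((posSemidef_conjTranspose_mul_self B).isHermitian.eigenvalues i))
  rw [smin_eq_iInf_sqrt_eigenvalues, ← hi]
  exact Real.sqrt_pos.mpr (hB.eigenvalues_pos i)

theorem polarFactor_eq_mul_inv_cfc_sqrt {n k : ℕ} (B : Matrix (Fin n) (Fin k) ℂ) :
    polarFactor B = B * (cfc Real.sqrt (Bᴴ * B))⁻¹ := by
  rw [(posSemidef_conjTranspose_mul_self B).isHermitian.cfc_eq, IsHermitian.cfc,
    Unitary.conjStarAlgAut_apply]
  rfl

theorem dist_polarFactor_of_same_range_general {n k : ℕ}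
    (B P : Matrix (Fin n) (Fin k) ℂ) (hrank : B.rank = k) (hP : Pᴴ * P = 1) :
    frobNorm (P - polarFactor B) ≤
      Real.sqrt (2 * (trNorm B - (Matrix.trace (Pᴴ * B)).re) / smin B) := by
  obtain rfl | hk := eq_or_ne k 0
  · simp [frobNorm]
  have := NeZero.mk hk
  set H := cfc Real.sqrt (Bᴴ * B)
  have hBB : IsUnit (Bᴴ * B) :=
    isUnit_of_rank_eq_card (by rw [rank_conjTranspose_mul_self, hrank, Fintype.card_fin])
  have hHH : H * H = Bᴴ * B := (posSemidef_conjTranspose_mul_self B).cfc_sqrt_mul_self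
  have hH : H.IsHermitian := cfc_predicate Real.sqrt (Bᴴ * B)
  have hHunit : IsUnit H := isUnit_of_mul_isUnit_left (hHH ▸ hBB)
  have hQ : (polarFactor B)ᴴ * polarFactor B = 1 := by
    rw [polarFactor_eq_mul_inv_cfc_sqrt]
    exact conjTranspose_mul_inv_mul_self_eq_one hH hHH hHunit
  have hQH : polarFactor B * H = B := by
    rw [polarFactor_eq_mul_inv_cfc_sqrt]
    exact nonsing_inv_mul_cancel_right _ _ ((isUnit_iff_isUnit_det H).mp hHunit)
  have key := mul_re_trace_conjTranspose_sub_mul_sub_le hP hQ hH (algebraMap_smin_le_cfc_sqrt B)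
  rw [hQH, ← trNorm_eq_re_trace_cfc_sqrt] at key
  rw [frobNorm_eq_sqrt_re_trace]
  exact Real.sqrt_le_sqrt ((le_div_iff₀ (smin_pos hBB)).mpr (by linarith))

theorem dist_polarFactor_of_same_range {n k : ℕ} (hkn : k ≤ n)
    (B P : Matrix (Fin n) (Fin k) ℂ) (hrank : B.rank = k) (hP : Pᴴ * P = 1)
    (hrange : LinearMap.range (Matrix.mulVecLin P) =
      LinearMap.range (Matrix.mulVecLin (polarFactor B))) :
    frobNorm (P - polarFactor B) ≤
      Real.sqrt (2 * (trNorm B - (Matrix.trace (Pᴴ * B)).re) / smin B) :=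
  dist_polarFactor_of_same_range_general B P hrank hP
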